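/- Suppose under H₁ a random variable N is distributed as N((z*−μ)/n, (n−1)σ²/n²) and the test statistic S(N) = c₀ + c₁·N + c₂·N² is as in the Type I error setting. Let m* = (z*−μ)²/σ², a = √(m*·n), and for γ ≤ γ_max = (1/2)(m* − log((n−1)/n)) let b(γ) = √((n−1)(m* − log(1−1/n) − 2γ)). Then P(S(N) < γ) = Φ(a·√((n−1)/n) − b(γ)·√(n/(n−1))) + Φ(−a·√((n−1)/n) − b(γ)·√(n/(n−1))). -/

import Mathlib

/-!
Completing the square, `S x - γ = (β ^ 2 - ((x - d / n) / s - α) ^ 2) / (2 * n)`, where `d = z* - μ`,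
`s = σ √(n - 1) / n` is the standard deviation of `N`, `α = d √(n - 1) / σ` and
`β = √(2 n (γmax - γ))`. Hence `S(N) < γ` exactly when the standardized variable falls outside
`[α - β, α + β]`, an event of probability `Φ(α - β) + Φ(-α - β)`. Finally `a √((n-1)/n) = |α|`,
`b(γ) √(n/(n-1)) = β`, and the sum is even in `α`.
-/

open Real ProbabilityTheory

noncomputable def stdNormalCDF (x : ℝ) : ℝ :=
  ((gaussianReal 0 1) (Set.Iic x)).toReal

open MeasureTheory Set

instance : NullSingletonClass (gaussianReal 0 1) := nullSingletonClass_gaussianReal one_ne_zero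

lemma stdNormalCDF_eq_measureReal (x : ℝ) : stdNormalCDF x = (gaussianReal 0 1).real (Iic x) :=
  rfl

lemma stdNormalCDF_neg (x : ℝ) : stdNormalCDF (-x) = 1 - stdNormalCDF x := by
  have hneg : (gaussianReal 0 1).map (fun y ↦ -y) = gaussianReal 0 1 := by
    simpa using gaussianReal_map_neg (μ := 0) (v := 1)
  rw [stdNormalCDF_eq_measureReal, ← hneg, map_measureReal_apply (by fun_prop) measurableSet_Iic]
  change (gaussianReal 0 1).real (-Iic (-x)) = _
  rw [neg_Iic, neg_neg, ← measureReal_congr Ioi_ae_eq_Ici, ← compl_Iic,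
    probReal_compl_eq_one_sub measurableSet_Iic, stdNormalCDF_eq_measureReal]

lemma setOf_sq_lt_sub_sq {R : Type*} [CommRing R] [LinearOrder R] [IsStrictOrderedRing R]
    {β : R} (hβ : 0 ≤ β) (α : R) :
    {z : R | β ^ 2 < (z - α) ^ 2} = Iio (α - β) ∪ Ioi (α + β) := by
  ext z
  rw [mem_ofPred, sq_lt_sq, abs_of_nonneg hβ, lt_abs, mem_union, mem_Iio, mem_Ioi]
  constructor <;> rintro (h | h) <;> [right; left; right; left] <;> linarith

lemma stdNormal_measureReal_sq_lt_sub_sq {β : ℝ} (hβ : 0 ≤ β) (α : ℝ) :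
    (gaussianReal 0 1).real {z | β ^ 2 < (z - α) ^ 2}
      = stdNormalCDF (α - β) + stdNormalCDF (-α - β) := by
  have hdisj : Disjoint (Iio (α - β)) (Ioi (α + β)) :=
    (Iic_disjoint_Ioi (by linarith)).mono_left Iio_subset_Iic_self
  rw [setOf_sq_lt_sub_sq hβ, measureReal_union hdisj measurableSet_Ioi,
    measureReal_congr Iio_ae_eq_Iic, ← compl_Iic, probReal_compl_eq_one_sub measurableSet_Iic,
    ← stdNormalCDF_eq_measureReal, ← stdNormalCDF_eq_measureReal, neg_sub_left, stdNormalCDF_neg,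
    add_comm β]

lemma gaussianReal_map_standardize (m : ℝ) {s : ℝ} (hs : 0 < s) :
    (gaussianReal m (s ^ 2).toNNReal).map (fun x ↦ (x - m) / s) = gaussianReal 0 1 := by
  have hcomp : (fun x ↦ (x - m) / s) = (· / s) ∘ (· - m) := rfl
  rw [hcomp, ← Measure.map_map (by fun_prop) (by fun_prop), gaussianReal_map_sub_const,
    gaussianReal_map_div_const, sub_self, zero_div]
  congr
  ext
  simp [Real.coe_toNNReal _ (sq_nonneg s), hs.ne']

lemma gaussianReal_measureReal_sq_lt_standardized_sub_sq (m : ℝ) {s β : ℝ} (hs : 0 < s)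
    (hβ : 0 ≤ β) (α : ℝ) :
    (gaussianReal m (s ^ 2).toNNReal).real {x | β ^ 2 < ((x - m) / s - α) ^ 2}
      = stdNormalCDF (α - β) + stdNormalCDF (-α - β) := by
  rw [← stdNormal_measureReal_sq_lt_sub_sq hβ, ← gaussianReal_map_standardize m hs,
    map_measureReal_apply (by fun_prop) (measurableSet_lt measurable_const (by fun_prop))]
  rfl

lemma testStatistic_sub_eq {n σ : ℝ} (hn : 1 < n) (hσ : σ ≠ 0) (d L γ x : ℝ) :
    -(1 / 2) * L - d ^ 2 / (2 * (n - 1) * σ ^ 2) + d * n / ((n - 1) * σ ^ 2) * x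
        + -n / (2 * (n - 1) * σ ^ 2) * x ^ 2 - γ
      = (n * (d ^ 2 / σ ^ 2 - L - 2 * γ)
          - ((x - d / n) / (σ * √(n - 1) / n) - d * √(n - 1) / σ) ^ 2) / (2 * n) := by
  have hn1 : 0 < n - 1 := sub_pos.2 hn
  have hsqrt : √(n - 1) ^ 2 = n - 1 := sq_sqrt hn1.le
  have : √(n - 1) ≠ 0 := (sqrt_pos.2 hn1).ne'
  field_simp
  rw [hsqrt]
  ring

theorem semi_type_two_error_general
    (n : ℕ) (hn : 2 ≤ n) (σ μ zstar : ℝ) (hσ : 0 < σ)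
    (c₀ c₁ c₂ mstar a γmax : ℝ)
    (hc₂ : c₂ = -(n : ℝ) / (2 * ((n : ℝ) - 1) * σ ^ 2))
    (hc₁ : c₁ = (zstar - μ) * n / (((n : ℝ) - 1) * σ ^ 2))
    (hc₀ : c₀ = -(1 / 2) * Real.log (((n : ℝ) - 1) / n)
        - (zstar - μ) ^ 2 / (2 * ((n : ℝ) - 1) * σ ^ 2))
    (hm : mstar = (zstar - μ) ^ 2 / σ ^ 2)
    (ha : a = Real.sqrt (mstar * n))
    (hγmax : γmax = (1 / 2) * (mstar - Real.log (((n : ℝ) - 1) / n)))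
    (S : ℝ → ℝ) (hS : ∀ x, S x = c₀ + c₁ * x + c₂ * x ^ 2)
    (b : ℝ → ℝ)
    (hb : ∀ γ, b γ = Real.sqrt (((n : ℝ) - 1) * (mstar - Real.log (1 - 1 / n) - 2 * γ)))
    (P : MeasureTheory.Measure ℝ)
    (hP : P = gaussianReal ((zstar - μ) / n) ((((n : ℝ) - 1) * σ ^ 2 / (n : ℝ) ^ 2).toNNReal))
    (γ : ℝ) (hγ : γ ≤ γmax) :
    (P {x | S x < γ}).toReal
      = stdNormalCDF (a * Real.sqrt (((n : ℝ) - 1) / n)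
            - b γ * Real.sqrt ((n : ℝ) / ((n : ℝ) - 1)))
        + stdNormalCDF (-a * Real.sqrt (((n : ℝ) - 1) / n)
            - b γ * Real.sqrt ((n : ℝ) / ((n : ℝ) - 1))) := by
  subst hc₀ hc₁ hc₂ hm ha hγmax hP
  have hn1 : (1 : ℝ) < n := by exact_mod_cast hn
  set d := zstar - μ
  set L := Real.log (((n : ℝ) - 1) / n)
  set s := σ * √((n : ℝ) - 1) / n
  set α := d * √((n : ℝ) - 1) / σ
  set β := √(n * (d ^ 2 / σ ^ 2 - L - 2 * γ))
  have hβsq : β ^ 2 = n * (d ^ 2 / σ ^ 2 - L - 2 * γ) := sq_sqrt (by nlinarith)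
  have hset : {x | S x < γ} = {x | β ^ 2 < ((x - d / n) / s - α) ^ 2} := by
    ext x
    change S x < γ ↔ β ^ 2 < ((x - d / n) / s - α) ^ 2
    rw [← sub_neg, hS, testStatistic_sub_eq hn1 hσ.ne', ← hβsq, div_lt_iff₀ (by positivity), zero_mul,
      sub_neg]
  have hvar : (((n : ℝ) - 1) * σ ^ 2 / (n : ℝ) ^ 2).toNNReal = (s ^ 2).toNNReal := by
    rw [div_pow, mul_pow, sq_sqrt (by linarith)]
    congr 1
    ring
  have hα : √(d ^ 2 / σ ^ 2 * n) * √((n - 1) / n) = |α| := by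
    rw [← sqrt_mul (by positivity), ← sqrt_sq_eq_abs, div_pow, mul_pow, sq_sqrt (by linarith)]
    congr 1
    field_simp
  have hβ : b γ * √(n / (n - 1)) = β := by
    have : (n : ℝ) - 1 ≠ 0 := by linarith
    rw [hb, ← sqrt_mul' _ (by positivity), one_sub_div (by positivity)]
    congr 1
    field_simp
    rfl
  rw [hvar, hset, ← measureReal_def,
    gaussianReal_measureReal_sq_lt_standardized_sub_sq _ (by positivity) (sqrt_nonneg _), neg_mul,
    hα, hβ]
  rcases abs_choice α with h | h
  · rw [h]
  · rw [h, neg_neg, add_comm]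

/-- Type II error of the sequential membership inference test (Lemma 3.5). -/
theorem semi_type_two_error
    (n : ℕ) (hn : 2 ≤ n) (σ μ zstar : ℝ) (hσ : 0 < σ) (hz : zstar ≠ μ)
    (c₀ c₁ c₂ mstar a γmax : ℝ)
    (hc₂ : c₂ = -(n : ℝ) / (2 * ((n : ℝ) - 1) * σ ^ 2))
    (hc₁ : c₁ = (zstar - μ) * n / (((n : ℝ) - 1) * σ ^ 2))
    (hc₀ : c₀ = -(1 / 2) * Real.log (((n : ℝ) - 1) / n)
        - (zstar - μ) ^ 2 / (2 * ((n : ℝ) - 1) * σ ^ 2))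
    (hm : mstar = (zstar - μ) ^ 2 / σ ^ 2)
    (ha : a = Real.sqrt (mstar * n))
    (hγmax : γmax = (1 / 2) * (mstar - Real.log (((n : ℝ) - 1) / n)))
    (S : ℝ → ℝ) (hS : ∀ x, S x = c₀ + c₁ * x + c₂ * x ^ 2)
    (b : ℝ → ℝ)
    (hb : ∀ γ, b γ = Real.sqrt (((n : ℝ) - 1) * (mstar - Real.log (1 - 1 / n) - 2 * γ)))
    (P : MeasureTheory.Measure ℝ)
    (hP : P = gaussianReal ((zstar - μ) / n) ((((n : ℝ) - 1) * σ ^ 2 / (n : ℝ) ^ 2).toNNReal))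
    (γ : ℝ) (hγ : γ ≤ γmax) :
    (P {x | S x < γ}).toReal
      = stdNormalCDF (a * Real.sqrt (((n : ℝ) - 1) / n)
            - b γ * Real.sqrt ((n : ℝ) / ((n : ℝ) - 1)))
        + stdNormalCDF (-a * Real.sqrt (((n : ℝ) - 1) / n)
            - b γ * Real.sqrt ((n : ℝ) / ((n : ℝ) - 1))) :=
  semi_type_two_error_general n hn σ μ zstar hσ c₀ c₁ c₂ mstar a γmax hc₂ hc₁ hc₀ hm ha hγmax S hS b
    hb P hP γ hγ
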